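/- arXiv:1602.03445 — 2 statements merged into one kernel-verified Lean document; each statement's English description precedes it below -/
import Mathlib

section
/- If S is a finite commutative unital semigroup that is unit-stabilized (i.e., (S, ∅) is a unit-stabilized pair), then D(S) = D(U(S)). -/
/-!
Read a sequence greedily, keeping a term only when it enlarges the stabilizer in `U(S)` of the
product of the terms kept so far. By unit-stabilization every other term acts on that product as
a unit, and every kept term comes with a unit witnessing the growth of the stabilizer. Replacing
each term by its unit gives a unit sequence of the same length. A shorter subsequence with the
same product cannot omit a witness, since the witnesses lie in an increasing chain of subgroups;
so it omits a replaced term, and dropping that term from the original sequence keeps its product.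
-/

/-- A list (sequence) in a commutative monoid is reducible if a proper
subsequence has the same product. -/
def Reducible {M : Type*} [CommMonoid M] (A : List M) : Prop :=
  ∃ B : List M, List.Sublist B A ∧ B.length < A.length ∧ B.prod = A.prod

/-- The Davenport constant: the least positive `n` such that every sequence of
length `n` is reducible (`⊤` if none exists). -/
noncomputable def davenport (M : Type*) [CommMonoid M] : ℕ∞ :=
  sInf {k : ℕ∞ | ∃ n : ℕ, k = n ∧ 0 < n ∧ ∀ A : List M, A.length = n → Reducible A}

/-- An ideal of a commutative monoid. -/
def IsMulIdeal {M : Type*} [CommMonoid M] (T : Set M) : Prop :=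
  ∀ s t : M, t ∈ T → s * t ∈ T

/-- The relative Davenport constant `D(S, T)`: the least positive `n` such
that every sequence of length `n` with product in `T` is reducible. -/
noncomputable def davenportRel (M : Type*) [CommMonoid M] (T : Set M) : ℕ∞ :=
  sInf {k : ℕ∞ | ∃ n : ℕ, k = n ∧ 0 < n ∧
    ∀ A : List M, A.length = n → A.prod ∈ T → Reducible A}

/-- `(S, T)` is a unit-stabilized pair. -/
def UnitStabilizedPair (M : Type*) [CommMonoid M] (T : Set M) : Prop :=
  ∀ a b : M, a * b ∉ T →
    {u : Mˣ | (u : M) * a = a} = {u : Mˣ | (u : M) * (a * b) = a * b} →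
    ∃ u : Mˣ, a * b = a * u

open MulAction

section Reducible

variable {M : Type*} [CommMonoid M]

theorem reducible_of_subperm {A B : List M} (hB : B.Subperm A) (hlen : B.length < A.length)
    (hprod : B.prod = A.prod) : Reducible A := by
  obtain ⟨B', hperm, hB'⟩ := hB
  exact ⟨B', hB', hperm.length_eq ▸ hlen, hperm.prod_eq ▸ hprod⟩

theorem Reducible.of_map {N : Type*} [CommMonoid N] {f : M →* N} (hf : Function.Injective f)
    {A : List M} (h : Reducible (A.map f)) : Reducible A := by
  obtain ⟨B, hB, hlen, hprod⟩ := h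
  obtain ⟨B₀, hB₀, rfl⟩ := List.sublist_map_iff.mp hB
  exact ⟨B₀, hB₀, by simpa using hlen, hf (by simpa only [map_list_prod] using hprod)⟩

theorem davenport_congr {N : Type*} [CommMonoid N]
    (h : ∀ n : ℕ, (∀ A : List M, A.length = n → Reducible A) ↔
      ∀ A : List N, A.length = n → Reducible A) :
    davenport M = davenport N := by
  simp only [davenport, h]

end Reducible

theorem not_reducible_cons {G : Type*} [CommGroup G] {H : Subgroup G} {v : G} {vs : List G}
    (hvs : ¬ Reducible vs) (hmem : ∀ w ∈ vs, w ∈ H) (hv : v ∉ H) : ¬ Reducible (v :: vs) := by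
  rintro ⟨L, hL, hlen, hprod⟩
  rw [List.prod_cons] at hprod
  cases hL with
  | cons _ hL =>
    apply hv
    rw [eq_mul_inv_of_mul_eq hprod.symm]
    exact H.mul_mem (H.list_prod_mem fun w hw => hmem w (hL.subset hw))
      (H.inv_mem (H.list_prod_mem hmem))
  | cons_cons _ hL =>
    exact hvs ⟨_, hL, by simpa using hlen, mul_left_cancel hprod⟩

theorem mul_prod_map_fst_eq_smul {G M : Type*} [Monoid G] [CommMonoid M] [MulAction G M]
    [IsScalarTower G M M] {p : M} :
    ∀ {R : List (M × G)}, (∀ x ∈ R, p * x.1 = x.2 • p) →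
      p * (R.map Prod.fst).prod = (R.map Prod.snd).prod • p
  | [], _ => by simp
  | x :: R, h => by
    have ih := mul_prod_map_fst_eq_smul fun y hy => h y (List.mem_cons_of_mem x hy)
    calc p * (x.1 * (R.map Prod.fst).prod) = (p * x.1) * (R.map Prod.fst).prod := by
          rw [mul_assoc]
      _ = x.2 • (p * (R.map Prod.fst).prod) := by rw [h x List.mem_cons_self, smul_mul_assoc]
      _ = (x.2 * (R.map Prod.snd).prod) • p := by rw [ih, mul_smul]

section UnitStabilized

variable {S : Type*} [CommMonoid S]

theorem stabilizer_le_stabilizer_mul (a b : S) : stabilizer Sˣ a ≤ stabilizer Sˣ (a * b) :=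
  fun u hu => by rw [mem_stabilizer_iff, ← smul_mul_assoc, mem_stabilizer_iff.mp hu]

theorem UnitStabilizedPair.exists_smul_eq_mul (hus : UnitStabilizedPair S ∅) {a b : S}
    (h : stabilizer Sˣ (a * b) ≤ stabilizer Sˣ a) : ∃ u : Sˣ, a * b = u • a := by
  obtain ⟨u, hu⟩ := hus a b (Set.notMem_empty _)
    (Set.ext fun u => ⟨fun hu => stabilizer_le_stabilizer_mul a b hu, fun hu => h hu⟩)
  exact ⟨u, hu.trans (mul_comm _ _)⟩

structure UnitReduction (A : List S) where
  kept : List S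
  pairs : List (S × Sˣ)
  chain : List Sˣ
  perm : A.Perm (kept ++ pairs.map Prod.fst)
  mul_fst_eq_smul : ∀ x ∈ pairs, kept.prod * x.1 = x.2 • kept.prod
  length_chain : chain.length = kept.length
  chain_mem_stabilizer : ∀ v ∈ chain, v ∈ stabilizer Sˣ kept.prod
  not_reducible_chain : ¬ Reducible chain

theorem UnitReduction.nonempty (hus : UnitStabilizedPair S ∅) (A : List S) :
    Nonempty (UnitReduction A) := by
  induction A with
  | nil =>
    exact ⟨⟨[], [], [], .nil, by simp, rfl, by simp, fun ⟨_, _, hlen, _⟩ => by simp at hlen⟩⟩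
  | cons a A ih =>
    obtain ⟨B, P, vs, hperm, hP, hlen, hvs, hirr⟩ := ih
    by_cases hstab : stabilizer Sˣ (B.prod * a) ≤ stabilizer Sˣ B.prod
    · obtain ⟨u, hu⟩ := hus.exists_smul_eq_mul hstab
      refine ⟨⟨B, (a, u) :: P, vs, ?_, ?_, hlen, hvs, hirr⟩⟩
      · exact (hperm.cons a).trans (by simp [List.perm_middle.symm])
      · simpa [hu] using hP
    · obtain ⟨v, hv, hvB⟩ := SetLike.not_le_iff_exists.mp hstab
      have hprod : (a :: B).prod = B.prod * a := by rw [List.prod_cons, mul_comm]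
      refine ⟨⟨a :: B, P, v :: vs, hperm.cons a, fun x hx => ?_, by simp [hlen], ?_,
        not_reducible_cons hirr hvs hvB⟩⟩
      · rw [hprod, mul_right_comm, hP x hx, smul_mul_assoc]
      · simpa only [hprod, List.forall_mem_cons] using
          ⟨hv, fun w hw => stabilizer_le_stabilizer_mul _ a (hvs w hw)⟩

theorem reducible_of_forall_reducible_units (hus : UnitStabilizedPair S ∅) {n : ℕ}
    (hU : ∀ L : List Sˣ, L.length = n → Reducible L) (A : List S) (hA : A.length = n) :
    Reducible A := by
  obtain ⟨B, P, vs, hperm, hP, hlen, hvs, hirr⟩ := UnitReduction.nonempty hus A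
  have hAlen : A.length = (P.map Prod.snd ++ vs).length := by
    simp [hperm.length_eq, hlen, add_comm]
  obtain ⟨L, hL, hLlen, hLprod⟩ := hU _ (hAlen ▸ hA)
  obtain ⟨us', vs', rfl, hus', hvs'⟩ := List.sublist_append_iff.mp hL
  obtain ⟨R, hR, rfl⟩ := List.sublist_map_iff.mp hus'
  have hstab : ∀ ws : List Sˣ, ws.Sublist vs → ws.prod ∈ stabilizer Sˣ B.prod :=
    fun ws hws => Subgroup.list_prod_mem _ fun w hw => hvs w (hws.subset hw)
  have hRP : (R.map Prod.snd).prod • B.prod = (P.map Prod.snd).prod • B.prod := by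
    calc (R.map Prod.snd).prod • B.prod = (R.map Prod.snd ++ vs').prod • B.prod := by
          rw [List.prod_append, mul_smul, mem_stabilizer_iff.mp (hstab vs' hvs')]
      _ = (P.map Prod.snd).prod • B.prod := by
          rw [hLprod, List.prod_append, mul_smul,
            mem_stabilizer_iff.mp (hstab vs (List.Sublist.refl vs))]
  rcases hR.length_le.lt_or_eq with hRlt | hReq
  · refine reducible_of_subperm (B := B ++ R.map Prod.fst) ?_ ?_ ?_
    · exact hperm.subperm_left.mpr ((List.Sublist.refl B).append (hR.map _)).subperm
    · simp [hperm.length_eq, hRlt]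
    · rw [hperm.prod_eq, List.prod_append, List.prod_append,
        mul_prod_map_fst_eq_smul fun x hx => hP x (hR.subset hx),
        mul_prod_map_fst_eq_smul hP, hRP]
  · obtain rfl := hR.eq_of_length hReq
    exact (hirr ⟨vs', hvs', by simpa using hLlen, by simpa using hLprod⟩).elim

end UnitStabilized

theorem davenport_eq_units_of_unit_stabilized_general {S : Type*} [CommMonoid S]
    (hus : UnitStabilizedPair S (∅ : Set S)) :
    davenport S = davenport Sˣ :=
  davenport_congr fun _ =>
    ⟨fun h L hL =>
      Reducible.of_map (f := Units.coeHom S) Units.val_injective (h _ (by simpa using hL)),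
      fun h => reducible_of_forall_reducible_units hus h⟩

theorem davenport_eq_units_of_unit_stabilized {S : Type*} [CommMonoid S] [Finite S]
    (hus : UnitStabilizedPair S (∅ : Set S)) :
    davenport S = davenport Sˣ :=
  davenport_eq_units_of_unit_stabilized_general hus
end

section
/- Let S be an almost unit-stabilized finite commutative unital semigroup and S' any finite commutative unital semigroup. Then D(S × S') = max(D(U(S) × S'), D(S, {0}) + D(S') − 1). -/
/-!
For the lower bound, `Sˣ × S'` embeds in `S × S'`, and a longest irreducible sequence of `S` with
product `0`, placed in the first coordinate, followed by a longest irreducible sequence of `S'`,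
placed in the second, is an irreducible sequence of length `D(S, {0}) + D(S') - 2` in `S × S'`.

For the upper bound let `A` be a sequence in `S × S'` with first-coordinate product `α`. If
`α = 0`, a shortest subsequence with first product `0` has fewer than `D(S, {0})` terms, so the
other terms are at least `D(S')` many and one of them can be dropped without changing the second
coordinate. If `α ≠ 0`, take a shortest subsequence `I` whose first product `s` has the same unit
stabilizer as `α`. Unit-stabilization makes every other term act on `s` as a unit, and makes each
term of `I` strictly enlarge the stabilizer of the product of the terms after it; a unit chosen in
each of these gaps gives an irreducible sequence in `Sˣ` of length `|I|` inside the stabilizer of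
`α`. Appending it to the other terms of `A`, relabelled by their units, gives `|A|` terms in
`Sˣ × S'`, and any reduction of this sequence must drop one of the relabelled terms.
-/

open MulAction
open scoped List

section Reducible

variable {M : Type*} [CommMonoid M]

theorem not_reducible_nil : ¬ Reducible ([] : List M) := by
  rintro ⟨B, -, hlen, -⟩
  simp at hlen

theorem List.Sublist.eq_of_not_reducible {A B : List M} (h : ¬ Reducible A) (hB : B <+ A)
    (hprod : B.prod = A.prod) : B = A :=
  hB.eq_of_length (le_antisymm hB.length_le (not_lt.mp fun hlt => h ⟨B, hB, hlt, hprod⟩))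

theorem Reducible.perm {A A' : List M} (h : Reducible A) (hA : A.Perm A') : Reducible A' := by
  obtain ⟨B, hB, hlen, hprod⟩ := h
  obtain ⟨B', hB'B, hB'⟩ := hB.subperm.trans hA.subperm
  exact ⟨B', hB', by rwa [hB'B.length_eq, ← hA.length_eq],
    by rw [hB'B.prod_eq, hprod, hA.prod_eq]⟩

theorem reducible_of_perm_append {A I J J' : List M} (hA : A.Perm (I ++ J)) (hJ' : J' <+ J)
    (hlen : J'.length < J.length) (hprod : I.prod * J'.prod = I.prod * J.prod) : Reducible A :=
  Reducible.perm ⟨I ++ J', hJ'.append_left I, by simpa using hlen, by simpa using hprod⟩ hA.symm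

theorem reducible_map_iff {ι : Type*} {f : ι → M} {L : List ι} :
    Reducible (L.map f) ↔
      ∃ L' : List ι, L' <+ L ∧ L'.length < L.length ∧ (L'.map f).prod = (L.map f).prod := by
  constructor
  · rintro ⟨B, hB, hlen, hprod⟩
    obtain ⟨L', hL', rfl⟩ := List.sublist_map_iff.mp hB
    exact ⟨L', hL', by simpa using hlen, hprod⟩
  · rintro ⟨L', hL', hlen, hprod⟩
    exact ⟨L'.map f, hL'.map f, by simpa using hlen, hprod⟩

theorem Reducible.cons_cons_of_mul {a b : M} {t : List M} (h : Reducible ((a * b) :: t)) :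
    Reducible (a :: b :: t) := by
  obtain ⟨B, hB, hlen, hprod⟩ := h
  rcases List.sublist_cons_iff.mp hB with hBt | ⟨r, rfl, hr⟩
  · exact ⟨B, (hBt.cons _).cons _, by simp at hlen ⊢; omega, by simp [hprod, mul_assoc]⟩
  · refine ⟨a :: b :: r, (hr.cons_cons _).cons_cons _, by simp at hlen ⊢; omega, ?_⟩
    simpa [mul_assoc] using hprod

theorem reducible_of_card_le [Finite M] {A : List M} (h : Nat.card M ≤ A.length) :
    Reducible A := by
  have := Fintype.ofFinite M
  obtain ⟨i, j, hij, hprod⟩ := Fintype.exists_ne_map_eq_of_card_lt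
    (fun k : Fin (A.length + 1) => (A.take k).prod)
    (by rw [Fintype.card_fin, ← Nat.card_eq_fintype_card]; omega)
  wlog hlt : i < j generalizing i j
  · exact this j i hij.symm hprod.symm (lt_of_le_of_ne (not_lt.mp hlt) hij.symm)
  refine ⟨A.take i ++ A.drop j, ?_, ?_, ?_⟩
  · simpa using (A.drop_sublist_drop_left hlt.le).append_left (A.take i)
  · simp only [List.length_append, List.length_take, List.length_drop]
    omega
  · rw [List.prod_append, hprod, List.prod_take_mul_prod_drop]

theorem mul_prod_map_eq_mul_prod_map {ι : Type*} {s : M} {f g : ι → M} {l : List ι}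
    (h : ∀ i ∈ l, s * f i = s * g i) : s * (l.map f).prod = s * (l.map g).prod := by
  induction l with
  | nil => rfl
  | cons i l ih =>
    simp only [List.map_cons, List.prod_cons]
    rw [mul_left_comm, ih fun j hj => h j (List.mem_cons_of_mem i hj), ← mul_assoc,
      mul_comm (f i), h i List.mem_cons_self, mul_assoc]

end Reducible

theorem exists_minimal_sublist {α : Type*} (P : List α → Prop) {A : List α} (h : P A) :
    ∃ L : List α, L <+ A ∧ P L ∧
      ∀ L' : List α, L' <+ L → P L' → L.length ≤ L'.length := by
  obtain ⟨L, ⟨hLA, hL⟩, hmin⟩ :=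
    (measure List.length).wf.has_min {L | L <+ A ∧ P L} ⟨A, List.Sublist.refl A, h⟩
  exact ⟨L, hLA, hL, fun L' hL' hP => not_lt.mp (hmin L' ⟨hL'.trans hLA, hP⟩)⟩

theorem davenport_eq_davenportRel_univ (M : Type*) [CommMonoid M] :
    davenport M = davenportRel M Set.univ := by
  simp [davenport, davenportRel]

section Davenport

variable {M : Type*} [CommMonoid M] {T : Set M}

theorem reducible_of_le_length {n : ℕ} (hn : 0 < n)
    (h : ∀ A : List M, A.length = n → A.prod ∈ T → Reducible A) {A : List M}
    (hA : n ≤ A.length) (hAT : A.prod ∈ T) : Reducible A := by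
  obtain ⟨k, hk⟩ := Nat.exists_eq_add_of_le hA
  induction k generalizing A with
  | zero => exact h A hk hAT
  | succ k ih =>
    rcases A with _ | ⟨a, _ | ⟨b, t⟩⟩
    · simp at hk
    · simp at hk; omega
    · refine Reducible.cons_cons_of_mul (ih ?_ ?_ ?_) <;> simp_all [mul_assoc] <;> omega

theorem davenportRel_le {n : ℕ} (hn : 0 < n)
    (h : ∀ A : List M, A.length = n → A.prod ∈ T → Reducible A) : davenportRel M T ≤ n :=
  sInf_le ⟨n, rfl, hn, h⟩

theorem exists_davenportRel_eq (h : davenportRel M T ≠ ⊤) :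
    ∃ n : ℕ, davenportRel M T = n ∧ 0 < n ∧
      ∀ A : List M, A.length = n → A.prod ∈ T → Reducible A := by
  have hne : {k : ℕ∞ | ∃ n : ℕ, k = n ∧ 0 < n ∧
      ∀ A : List M, A.length = n → A.prod ∈ T → Reducible A}.Nonempty := by
    refine Set.nonempty_iff_ne_empty.mpr fun hs => h ?_
    rw [davenportRel, hs, sInf_empty]
  exact csInf_mem hne

theorem reducible_of_davenportRel_le {A : List M} (h : davenportRel M T ≤ A.length)
    (hA : A.prod ∈ T) : Reducible A := by
  obtain ⟨n, hD, hn, hall⟩ :=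
    exists_davenportRel_eq (ne_top_of_le_ne_top (ENat.natCast_ne_top _) h)
  exact reducible_of_le_length hn hall (by exact_mod_cast hD ▸ h) hA

theorem length_lt_davenportRel {A : List M} (hA : A.prod ∈ T) (h : ¬ Reducible A) :
    (A.length : ℕ∞) < davenportRel M T :=
  lt_of_not_ge fun hle => h (reducible_of_davenportRel_le hle hA)

theorem exists_not_reducible_davenportRel_eq [Finite M] (hT : T.Nonempty) :
    ∃ A : List M, A.prod ∈ T ∧ ¬ Reducible A ∧ davenportRel M T = A.length + 1 := by
  have hfin : davenportRel M T ≠ ⊤ := ne_top_of_le_ne_top (ENat.natCast_ne_top _)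
    (davenportRel_le Nat.card_pos fun A hA _ => reducible_of_card_le hA.ge)
  obtain ⟨n, hD, hn, hall⟩ := exists_davenportRel_eq hfin
  obtain ⟨t, ht⟩ := hT
  rcases Nat.lt_or_ge 1 n with h1 | h1
  · have : ¬ ∀ A : List M, A.length = n - 1 → A.prod ∈ T → Reducible A := fun h' => by
      have := davenportRel_le (by omega) h'
      rw [hD, Nat.cast_le] at this
      omega
    push Not at this
    obtain ⟨A, hA, hAT, hAr⟩ := this
    exact ⟨A, hAT, hAr, by rw [hD, hA]; norm_cast; omega⟩
  · obtain ⟨B, hB, hlen, hprod⟩ := hall [t] (by simp; omega) (by simpa using ht)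
    obtain rfl : B = [] := List.length_eq_zero_iff.mp (by simpa using hlen)
    refine ⟨[], ?_, not_reducible_nil, by rw [hD]; simp; omega⟩
    rw [hprod]
    simpa using ht

theorem reducible_of_davenport_le {A : List M} (h : davenport M ≤ A.length) : Reducible A :=
  reducible_of_davenportRel_le (davenport_eq_davenportRel_univ M ▸ h) (Set.mem_univ _)

theorem davenport_le {n : ℕ∞} (h : ∀ A : List M, n ≤ A.length → Reducible A) :
    davenport M ≤ n := by
  induction n using ENat.recTopCoe with
  | top => exact le_top
  | coe n =>
    rcases Nat.eq_zero_or_pos n with rfl | hn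
    · exact absurd (h [] le_rfl) not_reducible_nil
    · rw [davenport_eq_davenportRel_univ]
      exact davenportRel_le hn fun A hA _ => h A (by exact_mod_cast hA.ge)

end Davenport

section Product

variable {M N : Type*} [CommMonoid M] [CommMonoid N]

theorem fst_list_prod (l : List (M × N)) : l.prod.1 = (l.map Prod.fst).prod :=
  map_list_prod (MonoidHom.fst M N) l

theorem snd_list_prod (l : List (M × N)) : l.prod.2 = (l.map Prod.snd).prod :=
  map_list_prod (MonoidHom.snd M N) l

theorem davenport_le_of_injective (f : M →* N) (hf : Function.Injective f) :
    davenport M ≤ davenport N := by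
  refine davenport_le fun A hA => ?_
  obtain ⟨A', hA', hlen, hprod⟩ :=
    reducible_map_iff.mp (reducible_of_davenport_le (A := A.map f) (by simpa using hA))
  exact ⟨A', hA', hlen, hf (by rwa [map_list_prod, map_list_prod])⟩

theorem not_reducible_map_inl_append_map_inr {LA : List M} {LB : List N}
    (hA : ¬ Reducible LA) (hB : ¬ Reducible LB) :
    ¬ Reducible (LA.map (MonoidHom.inl M N) ++ LB.map (MonoidHom.inr M N)) := by
  rintro ⟨B, hB', hlen, hprod⟩
  obtain ⟨B₁, B₂, rfl, h₁, h₂⟩ := List.sublist_append_iff.mp hB'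
  obtain ⟨LA', hLA', rfl⟩ := List.sublist_map_iff.mp h₁
  obtain ⟨LB', hLB', rfl⟩ := List.sublist_map_iff.mp h₂
  simp only [List.prod_append, ← map_list_prod, Prod.ext_iff, Prod.fst_mul, Prod.snd_mul,
    MonoidHom.inl_apply, MonoidHom.inr_apply, mul_one, one_mul] at hprod
  rw [hLA'.eq_of_not_reducible hA hprod.1, hLB'.eq_of_not_reducible hB hprod.2] at hlen
  exact lt_irrefl _ hlen

theorem davenportRel_add_davenport_sub_one_le [Finite M] [Finite N] {T : Set M}
    (hT : T.Nonempty) : davenportRel M T + davenport N - 1 ≤ davenport (M × N) := by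
  obtain ⟨LA, -, hA, hDA⟩ := exists_not_reducible_davenportRel_eq hT
  obtain ⟨LB, -, hB, hDB⟩ :=
    exists_not_reducible_davenportRel_eq (M := N) (T := Set.univ) Set.univ_nonempty
  have hlt := lt_of_not_ge fun hle =>
    not_reducible_map_inl_append_map_inr hA hB (reducible_of_davenport_le hle)
  rw [davenport_eq_davenportRel_univ N, hDA, hDB]
  simp only [List.length_append, List.length_map, Nat.cast_add] at hlt
  rw [show (LA.length : ℕ∞) + 1 + (LB.length + 1) - 1 = LA.length + LB.length + 1 by
    norm_cast; omega]
  exact Order.add_one_le_of_lt hlt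

end Product

theorem reducible_of_fst_prod_eq_zero {M N : Type*} [CommMonoidWithZero M] [CommMonoid N]
    {A : List (M × N)}
    (hA : davenportRel M {0} + davenport N - 1 ≤ A.length) (h0 : A.prod.1 = 0) :
    Reducible A := by
  obtain ⟨L, hLA, hL0, hLmin⟩ := exists_minimal_sublist (fun L : List M => L.prod = 0)
    (A := A.map Prod.fst) (by rwa [← fst_list_prod])
  obtain ⟨I, hIA, rfl⟩ := List.sublist_map_iff.mp hLA
  obtain ⟨J, hAIJ⟩ := hIA.exists_perm_append
  have hI : ((I.map Prod.fst).length : ℕ∞) < davenportRel M {0} :=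
    length_lt_davenportRel hL0 fun ⟨B, hB, hlen, hprod⟩ =>
      (hLmin B hB (hprod.trans hL0)).not_gt hlen
  have hJ : davenport N ≤ (J.map Prod.snd).length := by
    rw [hAIJ.length_eq, List.length_append] at hA
    rw [List.length_map] at hI ⊢
    generalize davenportRel M {0} = r at hI hA
    generalize davenport N = d at hA ⊢
    induction r using ENat.recTopCoe <;> induction d using ENat.recTopCoe <;> simp at hA
    norm_cast at *
    omega
  obtain ⟨J', hJ', hlen, hprod⟩ := reducible_map_iff.mp (reducible_of_davenport_le hJ)
  refine reducible_of_perm_append hAIJ hJ' hlen (Prod.ext ?_ ?_)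
  · simp [fst_list_prod, hL0]
  · simp [snd_list_prod, hprod]

theorem list_prod_mul_inv_mem_of_sublist {G : Type*} [Group G] {K : Subgroup G} {W ws : List G}
    (hK : ∀ x ∈ ws, x ∈ K) (hW : W <+ ws) : W.prod * ws.prod⁻¹ ∈ K :=
  K.mul_mem (K.list_prod_mem fun x hx => hK x (hW.subset hx)) (K.inv_mem (K.list_prod_mem hK))

theorem not_reducible_cons_s11 {G : Type*} [CommGroup G] {K : Subgroup G} {w : G} {ws : List G}
    (hws : ¬ Reducible ws) (hK : ∀ x ∈ ws, x ∈ K) (hw : w ∉ K) :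
    ¬ Reducible (w :: ws) := by
  rintro ⟨B, hB, hlen, hprod⟩
  rcases List.sublist_cons_iff.mp hB with hBws | ⟨B, rfl, hBws⟩
  · apply hw
    rw [show w = B.prod * ws.prod⁻¹ by rw [hprod, List.prod_cons, mul_inv_cancel_right]]
    exact list_prod_mul_inv_mem_of_sublist hK hBws
  · rw [List.prod_cons, List.prod_cons, mul_right_inj] at hprod
    exact hws ⟨B, hBws, by simpa using hlen, hprod⟩

theorem exists_sublist_of_reducible_append_map_inl {G N : Type*} [CommGroup G] [CommMonoid N]
    {K : Subgroup G} {ws : List G} (hws : ¬ Reducible ws) (hK : ∀ w ∈ ws, w ∈ K)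
    {F : List (G × N)} (hF : Reducible (F ++ ws.map (MonoidHom.inl G N))) :
    ∃ F' : List (G × N), F' <+ F ∧ F'.length < F.length ∧ F'.prod.2 = F.prod.2 ∧
      ∃ h ∈ K, F.prod.1 = F'.prod.1 * h := by
  obtain ⟨B, hB, hlen, hprod⟩ := hF
  obtain ⟨F', B₂, rfl, hF', hB₂⟩ := List.sublist_append_iff.mp hB
  obtain ⟨W, hW, rfl⟩ := List.sublist_map_iff.mp hB₂
  simp only [List.prod_append, ← map_list_prod, Prod.ext_iff, Prod.fst_mul, Prod.snd_mul,
    MonoidHom.inl_apply, mul_one] at hprod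
  refine ⟨F', hF', ?_, hprod.2, W.prod * ws.prod⁻¹, list_prod_mul_inv_mem_of_sublist hK hW,
    by rw [← mul_assoc, hprod.1, mul_inv_cancel_right]⟩
  by_contra hge
  obtain rfl := hF'.eq_of_length (le_antisymm hF'.length_le (not_lt.mp hge))
  obtain rfl := hW.eq_of_not_reducible hws (mul_left_cancel hprod.1)
  exact lt_irrefl _ hlen

section Stabilizer

variable {S : Type*} [CommMonoid S]

theorem stabilizer_le_of_dvd {x y : S} (h : x ∣ y) : stabilizer Sˣ x ≤ stabilizer Sˣ y := by
  obtain ⟨c, rfl⟩ := h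
  exact le_stabilizer_smul_left x c

theorem stabilizer_mul_units (x : S) (u : Sˣ) : stabilizer Sˣ (x * u) = stabilizer Sˣ x := by
  rw [mul_comm, ← smul_eq_mul, ← Units.smul_def, stabilizer_smul_eq_right]

theorem eq_of_mul_units_eq_of_mem_stabilizer {x y : S} {u : Sˣ} (hu : u ∈ stabilizer Sˣ y)
    (h : x * u = y) : x = y := by
  have hinv : (↑u⁻¹ : S) * y = y := (stabilizer Sˣ y).inv_mem hu
  rw [← hinv, ← h, mul_comm x, ← mul_assoc, Units.inv_mul, one_mul]

theorem exists_not_reducible_units {L : List S}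
    (h : ∀ a Y, a :: Y <:+ L → ¬ stabilizer Sˣ (a * Y.prod) ≤ stabilizer Sˣ Y.prod) :
    ∃ ws : List Sˣ, ws.length = L.length ∧ (∀ w ∈ ws, w ∈ stabilizer Sˣ L.prod) ∧
      ¬ Reducible ws := by
  induction L with
  | nil => exact ⟨[], rfl, by simp, not_reducible_nil⟩
  | cons a Y ih =>
    obtain ⟨ws, hlen, hws, hred⟩ := ih fun b Z hZ => h b Z (hZ.trans (List.suffix_cons a Y))
    obtain ⟨w, hw, hwY⟩ := SetLike.not_le_iff_exists.mp (h a Y List.suffix_rfl)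
    refine ⟨w :: ws, by simp [hlen], ?_, not_reducible_cons_s11 hred hws hwY⟩
    simp only [List.mem_cons, List.prod_cons]
    rintro x (rfl | hx)
    exacts [hw, stabilizer_le_of_dvd (dvd_mul_left _ a) (hws x hx)]

end Stabilizer

theorem exists_sublist_mul_prod_eq {S S' : Type*} [CommMonoid S] [CommMonoid S'] {s : S}
    {J : List (S × S')} (u : S × S' → Sˣ) (hu : ∀ p ∈ J, s * p.1 = s * u p) {ws : List Sˣ}
    (hws : ¬ Reducible ws) (hK : ∀ w ∈ ws, w ∈ stabilizer Sˣ (s * (J.map Prod.fst).prod))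
    (hlen : davenport (Sˣ × S') ≤ J.length + ws.length) :
    ∃ J' : List (S × S'), J' <+ J ∧ J'.length < J.length ∧
      s * (J'.map Prod.fst).prod = s * (J.map Prod.fst).prod ∧
      (J'.map Prod.snd).prod = (J.map Prod.snd).prod := by
  obtain ⟨F', hF', hlen', hsnd, h, hh, hfst⟩ :=
    exists_sublist_of_reducible_append_map_inl hws hK (F := J.map fun p => (u p, p.2))
      (reducible_of_davenport_le (by simpa using hlen))
  obtain ⟨J', hJ', rfl⟩ := List.sublist_map_iff.mp hF'
  have hunits : ∀ K : List (S × S'), K <+ J →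
      s * (K.map Prod.fst).prod = s * ((K.map fun p => (u p, p.2)).prod.1 : Sˣ) := by
    intro K hK
    rw [mul_prod_map_eq_mul_prod_map fun p hp => hu p (hK.subset hp)]
    rw [fst_list_prod, List.map_map, ← Units.coeHom_apply, map_list_prod, List.map_map]
    rfl
  refine ⟨J', hJ', by simpa using hlen', ?_,
    by simpa [snd_list_prod, Function.comp_def] using hsnd⟩
  rw [hunits J' hJ']
  apply eq_of_mul_units_eq_of_mem_stabilizer hh
  rw [hunits J (List.Sublist.refl J), hfst, Units.val_mul, mul_assoc]

section UnitStabilized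

variable {S : Type*} [CommMonoidWithZero S]

theorem UnitStabilizedPair.exists_unit_of_stabilizer_le (hus : UnitStabilizedPair S {0})
    {a b : S} (hab : a * b ≠ 0) (h : stabilizer Sˣ (a * b) ≤ stabilizer Sˣ a) :
    ∃ u : Sˣ, a * b = a * u :=
  hus a b hab (congrArg SetLike.coe (le_antisymm (stabilizer_le_of_dvd (dvd_mul_right a b)) h))

/-- Otherwise `a` would act on `Y.prod` as a unit and could be dropped from `L`. -/
theorem UnitStabilizedPair.not_stabilizer_le_of_minimal (hus : UnitStabilizedPair S {0})
    {L : List S} (hL : L.prod ≠ 0)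
    (hmin : ∀ L' : List S, L' <+ L → stabilizer Sˣ L'.prod = stabilizer Sˣ L.prod →
      L.length ≤ L'.length)
    {a : S} {Y : List S} (hY : a :: Y <:+ L) :
    ¬ stabilizer Sˣ (a * Y.prod) ≤ stabilizer Sˣ Y.prod := by
  intro hle
  obtain ⟨X, rfl⟩ := hY
  have hdvd : Y.prod * a ∣ (X ++ a :: Y).prod := by
    rw [List.prod_append, List.prod_cons, mul_comm a]
    exact dvd_mul_left _ _
  obtain ⟨u, hu⟩ := hus.exists_unit_of_stabilizer_le (ne_zero_of_dvd_ne_zero hL hdvd)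
    (by rwa [mul_comm])
  have hprod : (X ++ a :: Y).prod = (X ++ Y).prod * u := by
    simp only [List.prod_append, List.prod_cons]
    rw [mul_comm a, hu, mul_assoc]
  have := hmin (X ++ Y) ((List.sublist_cons_self a Y).append_left X)
    (by rw [hprod, stabilizer_mul_units])
  simp at this

end UnitStabilized

theorem UnitStabilizedPair.reducible_of_fst_prod_ne_zero {S S' : Type*} [CommMonoidWithZero S]
    [CommMonoid S'] (hus : UnitStabilizedPair S {0}) {A : List (S × S')}
    (hA : davenport (Sˣ × S') ≤ A.length) (h0 : A.prod.1 ≠ 0) : Reducible A := by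
  obtain ⟨L, hLA, hLα, hLmin⟩ := exists_minimal_sublist
    (fun L : List S => stabilizer Sˣ L.prod = stabilizer Sˣ A.prod.1) (A := A.map Prod.fst)
    (by rw [fst_list_prod])
  obtain ⟨I, hIA, rfl⟩ := List.sublist_map_iff.mp hLA
  obtain ⟨J, hAIJ⟩ := hIA.exists_perm_append
  set s := (I.map Prod.fst).prod
  have hsJ : s * (J.map Prod.fst).prod = A.prod.1 := by
    rw [hAIJ.prod_eq, fst_list_prod, List.map_append, List.prod_append]
  have hs0 : s ≠ 0 := left_ne_zero_of_mul (hsJ ▸ h0)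
  obtain ⟨ws, hwslen, hwsα, hws⟩ := exists_not_reducible_units fun a Y hY =>
    hus.not_stabilizer_le_of_minimal hs0 (fun L' hL' hst => hLmin L' hL' (hst.trans hLα)) hY
  have hunit : ∀ p : S × S', ∃ u : Sˣ, p ∈ J → s * p.1 = s * u := by
    intro p
    by_cases hp : p ∈ J
    · have hdvd : s * p.1 ∣ A.prod.1 :=
        hsJ ▸ mul_dvd_mul_left s (List.dvd_prod (List.mem_map_of_mem hp))
      obtain ⟨u, hu⟩ := hus.exists_unit_of_stabilizer_le (ne_zero_of_dvd_ne_zero h0 hdvd)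
        ((stabilizer_le_of_dvd hdvd).trans hLα.ge)
      exact ⟨u, fun _ => hu⟩
    · exact ⟨1, fun h => absurd h hp⟩
  choose u hu using hunit
  obtain ⟨J', hJ', hlen, hfst, hsnd⟩ := exists_sublist_mul_prod_eq u hu hws
    (by rwa [hsJ, ← hLα]) (by rwa [hwslen, List.length_map, add_comm, ← Nat.cast_add,
      ← List.length_append, ← hAIJ.length_eq])
  refine reducible_of_perm_append hAIJ hJ' hlen (Prod.ext ?_ ?_)
  · simpa [fst_list_prod] using hfst
  · simp [snd_list_prod, hsnd]

theorem davenport_prod_almost_unit_stabilized {S : Type*} [CommMonoidWithZero S]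
    [Finite S] (hus : UnitStabilizedPair S ({0} : Set S))
    {S' : Type*} [CommMonoid S'] [Finite S'] :
    davenport (S × S') =
      max (davenport (Sˣ × S')) (davenportRel S {0} + davenport S' - 1) := by
  refine le_antisymm (davenport_le fun A hA => ?_) (max_le ?_ ?_)
  · by_cases h0 : A.prod.1 = 0
    · exact reducible_of_fst_prod_eq_zero (le_of_max_le_right hA) h0
    · exact hus.reducible_of_fst_prod_ne_zero (le_of_max_le_left hA) h0
  · refine davenport_le_of_injective ((Units.coeHom S).prodMap (MonoidHom.id S')) ?_
    rw [MonoidHom.coe_prodMap]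
    exact Units.val_injective.prodMap Function.injective_id
  · exact davenportRel_add_davenport_sub_one_le (Set.singleton_nonempty 0)
end
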